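/- arXiv:hep-th/9802105 — 2 statements merged into one kernel-verified Lean document; each statement's English description precedes it below -/
import Mathlib

section
/- Let u : ℝ³ → ℂ be smooth and satisfy the CP¹-model equation of motion (1+|u|²)□u − 2ū⟨∂u,∂u⟩ = 0. Then the complex conjugate current j̄_μ = (∂_μū + ū²·∂_μu)/(1+|u|²)², μ = 0,1,2, is a conserved current, i.e. ∂₀j̄₀ − ∂₁j̄₁ − ∂₂j̄₂ = 0 on ℝ³. -/
open Complex ComplexConjugate Finset

/-- Partial derivative in direction `μ` of a complex-valued function on `ℝ³`. -/
noncomputable def pd (μ : Fin 3) (f : (Fin 3 → ℝ) → ℂ) (x : Fin 3 → ℝ) : ℂ :=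
  fderiv ℝ f x (Pi.single μ 1)

/-- The d'Alembertian `□u = ∂₀∂₀u − ∂₁∂₁u − ∂₂∂₂u` for the metric `diag(1,−1,−1)`. -/
noncomputable def dalembert (u : (Fin 3 → ℝ) → ℂ) (x : Fin 3 → ℝ) : ℂ :=
  pd 0 (pd 0 u) x - pd 1 (pd 1 u) x - pd 2 (pd 2 u) x

/-- Minkowski product of gradients `⟨∂f,∂g⟩ = ∂₀f·∂₀g − ∂₁f·∂₁g − ∂₂f·∂₂g`. -/
noncomputable def minkGrad (f g : (Fin 3 → ℝ) → ℂ) (x : Fin 3 → ℝ) : ℂ :=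
  pd 0 f x * pd 0 g x - pd 1 f x * pd 1 g x - pd 2 f x * pd 2 g x

/-- `(J₀,J₁,J₂)` is a conserved current if `∂₀J₀ − ∂₁J₁ − ∂₂J₂ = 0` identically. -/
def IsConservedCurrent (J : Fin 3 → (Fin 3 → ℝ) → ℂ) : Prop :=
  ∀ x, pd 0 (J 0) x - pd 1 (J 1) x - pd 2 (J 2) x = 0

section helpers

variable {f g u : (Fin 3 → ℝ) → ℂ} {x : Fin 3 → ℝ} {μ : Fin 3}

lemma pd_const (c : ℂ) : pd μ (fun _ => c) x = 0 := by
  simp [pd]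

lemma pd_add (hf : DifferentiableAt ℝ f x) (hg : DifferentiableAt ℝ g x) :
    pd μ (fun y => f y + g y) x = pd μ f x + pd μ g x := by
  simp [pd, fderiv_fun_add hf hg]

lemma pd_mul (hf : DifferentiableAt ℝ f x) (hg : DifferentiableAt ℝ g x) :
    pd μ (fun y => f y * g y) x = pd μ f x * g x + f x * pd μ g x := by
  simp [pd, fderiv_fun_mul hf hg]; ring

lemma pd_conj (hf : DifferentiableAt ℝ f x) :
    pd μ (fun y => conj (f y)) x = conj (pd μ f x) := by
  have h : (fun y => conj (f y)) = fun y => star (f y) := rfl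
  rw [pd, h, fderiv_star]
  simp [pd]

lemma pd_inv (hg : DifferentiableAt ℝ g x) (hx : g x ≠ 0) :
    pd μ (fun y => (g y)⁻¹) x = -pd μ g x / g x ^ 2 := by
  have h : (fun y => (g y)⁻¹) = Inv.inv ∘ g := rfl
  rw [pd, h, fderiv_comp x (differentiableAt_inv hx) hg, fderiv_inv' hx]
  simp [pd, ContinuousLinearMap.mulLeftRight_apply]
  rw [eq_div_iff (pow_ne_zero 2 hx)]
  field_simp

lemma pd_div (hf : DifferentiableAt ℝ f x) (hg : DifferentiableAt ℝ g x) (hx : g x ≠ 0) :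
    pd μ (fun y => f y / g y) x = (pd μ f x * g x - f x * pd μ g x) / g x ^ 2 := by
  simp only [div_eq_mul_inv]
  rw [pd_mul (g := fun y => (g y)⁻¹) hf (hg.inv hx), pd_inv hg hx]
  field_simp
  ring

lemma contDiff_pd (hu : ContDiff ℝ (⊤ : ℕ∞) u) : ContDiff ℝ (⊤ : ℕ∞) (pd μ u) :=
  (hu.fderiv_right (by simp)).clm_apply contDiff_const

end helpers

/-- The current `j̄_μ = (∂_μū + ū²∂_μu)/(1+|u|²)²` of the `CP¹`-model is conserved
on solutions of the equation of motion. -/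
theorem cp1_jbar_current_conserved (u : (Fin 3 → ℝ) → ℂ) (hu : ContDiff ℝ (⊤ : ℕ∞) u)
    (heom : ∀ x, (1 + u x * conj (u x)) * dalembert u x
        - 2 * conj (u x) * minkGrad u u x = 0) :
    IsConservedCurrent (fun μ x =>
      (pd μ (fun y => conj (u y)) x + (conj (u x)) ^ 2 * pd μ u x) /
        (1 + u x * conj (u x)) ^ 2) := by
  intro x
  have hud : Differentiable ℝ u := hu.differentiable (by simp)
  have hcud : Differentiable ℝ (fun y => conj (u y)) := fun y => ((hud y).star :)
  have hpdu : ∀ ν : Fin 3, Differentiable ℝ (pd ν u) :=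
    fun ν => (contDiff_pd hu).differentiable (by simp)
  have hcpdu : ∀ ν : Fin 3, Differentiable ℝ (fun y => conj (pd ν u y)) :=
    fun ν y => (((hpdu ν y).star :))
  have hsq : Differentiable ℝ (fun y => conj (u y) ^ 2) := fun y => (hcud y).pow 2
  have hNum : ∀ ν : Fin 3,
      Differentiable ℝ (fun y => conj (pd ν u y) + conj (u y) ^ 2 * pd ν u y) :=
    fun ν y => (hcpdu ν y).add ((hsq y).mul (hpdu ν y))
  have hWf : Differentiable ℝ (fun y => 1 + u y * conj (u y)) :=
    fun y => (differentiableAt_const 1).add ((hud y).mul (hcud y))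
  have hDen : Differentiable ℝ (fun y => (1 + u y * conj (u y)) ^ 2) :=
    fun y => (hWf y).pow 2
  have hW : ∀ y, (1 + u y * conj (u y)) ≠ 0 := by
    intro y h
    have h2 := congrArg Complex.re h
    rw [Complex.mul_conj] at h2
    simp at h2
    nlinarith [Complex.normSq_nonneg (u y), h2]
  have hpv : ∀ ν : Fin 3, pd ν (fun z => conj (u z)) = fun y => conj (pd ν u y) :=
    fun ν => funext fun y => pd_conj (hud y)
  have hsqf : (fun y => conj (u y) ^ 2) = fun y => conj (u y) * conj (u y) :=
    funext fun y => pow_two _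
  have hDenf : (fun y => (1 + u y * conj (u y)) ^ 2)
      = fun y => (1 + u y * conj (u y)) * (1 + u y * conj (u y)) :=
    funext fun y => pow_two _
  have hWpd : ∀ ν : Fin 3, pd ν (fun y => 1 + u y * conj (u y)) x
      = pd ν u x * conj (u x) + u x * conj (pd ν u x) := by
    intro ν
    rw [pd_add (g := fun y => u y * conj (u y)) (differentiableAt_const 1) ((hud x).mul (hcud x)),
      pd_mul (hud x) (hcud x), pd_const, pd_conj (hud x)]
    ring
  have key : ∀ ν : Fin 3,
      pd ν (fun y => (pd ν (fun z => conj (u z)) y + conj (u y) ^ 2 * pd ν u y) /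
        (1 + u y * conj (u y)) ^ 2) x =
      ((conj (pd ν (pd ν u) x) + 2 * conj (u x) * conj (pd ν u x) * pd ν u x
          + conj (u x) ^ 2 * pd ν (pd ν u) x) * (1 + u x * conj (u x)) ^ 2
        - (conj (pd ν u x) + conj (u x) ^ 2 * pd ν u x)
            * (2 * (1 + u x * conj (u x)) * (pd ν u x * conj (u x) + u x * conj (pd ν u x))))
        / ((1 + u x * conj (u x)) ^ 2) ^ 2 := by
    intro ν
    simp only [hpv ν]
    rw [pd_div (hNum ν x) (hDen x) (pow_ne_zero 2 (hW x)),
      pd_add (g := fun y => conj (u y) ^ 2 * pd ν u y) (hcpdu ν x) ((hsq x).mul (hpdu ν x)),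
      pd_mul (hsq x) (hpdu ν x), pd_conj (hpdu ν x)]
    rw [hsqf, pd_mul (hcud x) (hcud x), pd_conj (hud x)]
    rw [hDenf, pd_mul (hWf x) (hWf x), hWpd ν]
    ring
  have h1 := heom x
  simp only [dalembert, minkGrad] at h1
  have h2 := congrArg (starRingEnd ℂ) h1
  simp only [map_sub, map_add, map_mul, map_one, map_ofNat, map_zero, Complex.conj_conj] at h2
  simp only [hpv] at key ⊢
  rw [key 0, key 1, key 2, div_sub_div_same, div_sub_div_same, div_eq_zero_iff]
  left
  linear_combination (1 + u x * conj (u x)) * h2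
    + (1 + u x * conj (u x)) * conj (u x) ^ 2 * h1
end

section
/- Fix an integer j ≥ 1 and let u : ℝ³ → ℂ be smooth, nowhere vanishing, and satisfy the submodel equations of the CP¹-like model: (1+|u|²)□u − (j+1)ū⟨∂u,∂u⟩ = 0 and ⟨∂u,∂ū⟩ = 0. Then for every integer n ∈ ℤ the current J_μ^{(n)} = ū^n ∂_μu/(1+|u|²)^{j+1}, μ = 0,1,2, is a conserved current, i.e. ∂₀J₀^{(n)} − ∂₁J₁^{(n)} − ∂₂J₂^{(n)} = 0 on ℝ³. -/
open Complex ComplexConjugate Finset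

private lemma hasFDerivAt_zpow_comp {f : (Fin 3 → ℝ) → ℂ} {f' : (Fin 3 → ℝ) →L[ℝ] ℂ}
    {x : Fin 3 → ℝ} (hf : HasFDerivAt f f' x) (m : ℤ) (h : f x ≠ 0) :
    HasFDerivAt (fun y => f y ^ m) (((m : ℂ) * f x ^ (m - 1)) • f') x := by
  have h1 : HasDerivAt (fun z : ℂ => z ^ m) ((m : ℂ) * f x ^ (m - 1)) (f x) :=
    hasDerivAt_zpow m _ (Or.inl h)
  have h2 := (h1.hasFDerivAt.restrictScalars ℝ).comp x hf
  refine h2.congr_fderiv ?_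
  ext v
  simp
  ring

private lemma hasFDerivAt_conj' {f : (Fin 3 → ℝ) → ℂ} {f' : (Fin 3 → ℝ) →L[ℝ] ℂ}
    {x : Fin 3 → ℝ} (hf : HasFDerivAt f f' x) :
    HasFDerivAt (fun y => (starRingEnd ℂ) (f y))
      ((Complex.conjCLE.toContinuousLinearMap).comp f') x := by
  have := (Complex.conjCLE.toContinuousLinearMap.hasFDerivAt (x := f x)).comp x hf
  exact this

/-- For a nowhere-vanishing solution of the submodel of the `CP¹`-like model, the
current `J_μ^{(n)} = ū^n ∂_μu/(1+|u|²)^{j+1}` is conserved for every `n : ℤ`. -/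
theorem cp1_like_submodel_Jn_conserved (j : ℕ) (hj : 1 ≤ j)
    (u : (Fin 3 → ℝ) → ℂ) (hu : ContDiff ℝ (⊤ : ℕ∞) u) (hne : ∀ x, u x ≠ 0)
    (heom : ∀ x, (1 + u x * conj (u x)) * dalembert u x
        - ((j : ℂ) + 1) * conj (u x) * minkGrad u u x = 0)
    (hnull : ∀ x, minkGrad u (fun y => conj (u y)) x = 0)
    (n : ℤ) :
    IsConservedCurrent (fun μ x =>
      (conj (u x)) ^ n * pd μ u x / (1 + u x * conj (u x)) ^ (j + 1)) := by
  have hud : Differentiable ℝ u := hu.differentiable (by simp)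
  have hpdc : ∀ μ : Fin 3, ContDiff ℝ (⊤ : ℕ∞) (pd μ u) := by
    intro μ
    have h1 : ContDiff ℝ (⊤ : ℕ∞) (fderiv ℝ u) := hu.fderiv_right (by simp)
    exact (ContinuousLinearMap.apply ℝ ℂ (Pi.single μ 1)).contDiff.comp h1
  have hPne : ∀ y, (1 : ℂ) + u y * conj (u y) ≠ 0 := by
    intro y h
    rw [Complex.mul_conj] at h
    have := congrArg Complex.re h
    simp at this
    nlinarith [Complex.normSq_nonneg (u y), Complex.normSq_pos.mpr (hne y)]
  have hcne : ∀ y, conj (u y) ≠ 0 := by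
    intro y
    simpa using hne y
  set m : ℤ := -((j + 1 : ℕ) : ℤ) with hm
  intro x
  have key : ∀ ν : Fin 3,
      pd ν (fun y => conj (u y) ^ n * pd ν u y * (1 + u y * conj (u y)) ^ m) x =
        (n : ℂ) * conj (u x) ^ (n - 1) * conj (pd ν u x) * pd ν u x
            * (1 + u x * conj (u x)) ^ m
        + conj (u x) ^ n * pd ν (pd ν u) x * (1 + u x * conj (u x)) ^ m
        + conj (u x) ^ n * pd ν u x * ((m : ℂ) * (1 + u x * conj (u x)) ^ (m - 1)
            * (pd ν u x * conj (u x) + u x * conj (pd ν u x))) := by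
    intro ν
    have hu' : HasFDerivAt u (fderiv ℝ u x) x := (hud x).hasFDerivAt
    have hc' := hasFDerivAt_conj' hu'
    have hcn := hasFDerivAt_zpow_comp hc' n (hcne x)
    have hdu : HasFDerivAt (pd ν u) (fderiv ℝ (pd ν u) x) x :=
      (((hpdc ν).differentiable (by simp)) x).hasFDerivAt
    have hP : HasFDerivAt (fun y => (1 : ℂ) + u y * conj (u y))
        (0 + (u x • (Complex.conjCLE.toContinuousLinearMap).comp (fderiv ℝ u x)
          + conj (u x) • fderiv ℝ u x)) x :=
      (hasFDerivAt_const (1 : ℂ) x).add (hu'.mul hc')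
    have hPm := hasFDerivAt_zpow_comp hP m (hPne x)
    have hJ := (hcn.mul hdu).mul hPm
    rw [pd, HasFDerivAt.fderiv (f := fun y => conj (u y) ^ n * pd ν u y * (1 + u y * conj (u y)) ^ m) hJ]
    simp [pd]
    ring
  have hpdconj : ∀ μ : Fin 3, pd μ (fun y => conj (u y)) x = conj (pd μ u x) := by
    intro μ
    rw [pd, (hasFDerivAt_conj' ((hud x).hasFDerivAt)).fderiv]
    simp [pd]
  have hN := hnull x
  simp only [minkGrad, hpdconj] at hN
  have hE := heom x
  simp only [dalembert, minkGrad] at hE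
  show pd 0 (fun y => conj (u y) ^ n * pd 0 u y / (1 + u y * conj (u y)) ^ (j + 1)) x
      - pd 1 (fun y => conj (u y) ^ n * pd 1 u y / (1 + u y * conj (u y)) ^ (j + 1)) x
      - pd 2 (fun y => conj (u y) ^ n * pd 2 u y / (1 + u y * conj (u y)) ^ (j + 1)) x = 0
  have hfun : ∀ μ : Fin 3, (fun y => conj (u y) ^ n * pd μ u y / (1 + u y * conj (u y)) ^ (j + 1))
      = (fun y => conj (u y) ^ n * pd μ u y * (1 + u y * conj (u y)) ^ m) := by
    intro μ; funext y
    rw [hm, zpow_neg, zpow_natCast, div_eq_mul_inv]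
  rw [hfun 0, hfun 1, hfun 2, key 0, key 1, key 2]
  have hz1 : (1 + u x * conj (u x)) ^ m
      = (1 + u x * conj (u x)) ^ (m - 1) * (1 + u x * conj (u x)) := by
    rw [← zpow_add_one₀ (hPne x), sub_add_cancel]
  have hc1 : conj (u x) ^ n = conj (u x) ^ (n - 1) * conj (u x) := by
    rw [← zpow_add_one₀ (hcne x), sub_add_cancel]
  have hmc : (m : ℂ) = -((j : ℂ) + 1) := by rw [hm]; push_cast; ring
  rw [hz1, hc1, hmc]
  generalize (starRingEnd ℂ) (u x) ^ (n - 1) = A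
  generalize (1 + u x * (starRingEnd ℂ) (u x)) ^ (m - 1) = Q
  linear_combination (A * Q * ((n : ℂ) * (1 + u x * conj (u x))
      - ((j : ℂ) + 1) * conj (u x) * u x)) * hN + (A * Q * conj (u x)) * hE
end
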